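/- Under the identifying conditions for both potential outcome means, the average treatment effect E[Y^{a=1} − Y^{a=2} | S=1] equals φ = (γ_{1,1} − γ_{1,0}) − (γ_{0,2} − γ_{0,0}), i.e., a difference-in-differences of conditional outcome means standardized to the index-trial covariate distribution. -/

import Mathlib

open scoped Classical BigOperators
open Finset

noncomputable section

/-- Indicator of a proposition. -/
def ind (P : Prop) : ℝ := if P then 1 else 0

/-- Expectation with respect to weights `p` on a finite outcome space. -/
def pexp {Ω : Type*} [Fintype Ω] (p : Ω → ℝ) (f : Ω → ℝ) : ℝ := ∑ ω, p ω * f ω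

/-- Probability of an event. -/
def prob {Ω : Type*} [Fintype Ω] (p : Ω → ℝ) (B : Ω → Prop) : ℝ :=
  pexp p (fun ω => ind (B ω))

/-- Conditional expectation of `f` given event `B`. -/
def cexp {Ω : Type*} [Fintype Ω] (p : Ω → ℝ) (f : Ω → ℝ) (B : Ω → Prop) : ℝ :=
  pexp p (fun ω => f ω * ind (B ω)) / prob p B

/-- Conditional probability of `B` given `C`. -/
def cprob {Ω : Type*} [Fintype Ω] (p : Ω → ℝ) (B C : Ω → Prop) : ℝ :=
  prob p (fun ω => B ω ∧ C ω) / prob p C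

/-- Conditional outcome mean `g_{s,a}(x) = E[Y | X = x, S = s, A = a]`. -/
def gfun {Ω 𝒳 : Type*} [Fintype Ω] (p : Ω → ℝ) (X : Ω → 𝒳) (S A : Ω → ℕ)
    (Y : Ω → ℝ) (s a : ℕ) (x : 𝒳) : ℝ :=
  cexp p Y (fun ω => X ω = x ∧ S ω = s ∧ A ω = a)

/-- Standardized functional `γ_{s,a} = E[ E[Y | X, S=s, A=a] | S=1 ]`. -/
def gam {Ω 𝒳 : Type*} [Fintype Ω] (p : Ω → ℝ) (X : Ω → 𝒳) (S A : Ω → ℕ)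
    (Y : Ω → ℝ) (s a : ℕ) : ℝ :=
  cexp p (fun ω => gfun p X S A Y s a (X ω)) (fun ω => S ω = 1)

/-- Participation probability `p_s(x) = Pr[S = s | X = x]`. -/
def psel {Ω 𝒳 : Type*} [Fintype Ω] (p : Ω → ℝ) (X : Ω → 𝒳) (S : Ω → ℕ)
    (s : ℕ) (x : 𝒳) : ℝ :=
  cprob p (fun ω => S ω = s) (fun ω => X ω = x)

/-- Treatment probability `e_{s,a}(x) = Pr[A = a | X = x, S = s]`. -/
def etrt {Ω 𝒳 : Type*} [Fintype Ω] (p : Ω → ℝ) (X : Ω → 𝒳) (S A : Ω → ℕ)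
    (s a : ℕ) (x : 𝒳) : ℝ :=
  cprob p (fun ω => A ω = a) (fun ω => X ω = x ∧ S ω = s)

/-- Weight `w_{s,a}(X,S,A) = I(S=s, A=a) p_1(X) / (e_{s,a}(X) p_s(X))`. -/
def wgt {Ω 𝒳 : Type*} [Fintype Ω] (p : Ω → ℝ) (X : Ω → 𝒳) (S A : Ω → ℕ)
    (s a : ℕ) (ω : Ω) : ℝ :=
  ind (S ω = s ∧ A ω = a) * psel p X S 1 (X ω) /
    (etrt p X S A s a (X ω) * psel p X S s (X ω))

/-- Influence function `Γ_{s,a}(O)`. -/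
def Gam {Ω 𝒳 : Type*} [Fintype Ω] (p : Ω → ℝ) (X : Ω → 𝒳) (S A : Ω → ℕ)
    (Y : Ω → ℝ) (s a : ℕ) (ω : Ω) : ℝ :=
  (1 / prob p (fun ω' => S ω' = 1)) *
    (ind (S ω = 1) * (gfun p X S A Y s a (X ω) - gam p X S A Y s a)
      + wgt p X S A s a ω * (Y ω - gfun p X S A Y s a (X ω)))

/-- Variance of `f` under `p`. -/
def pvar {Ω : Type*} [Fintype Ω] (p : Ω → ℝ) (f : Ω → ℝ) : ℝ :=
  pexp p (fun ω => (f ω - pexp p f) ^ 2)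

/-! Both sides are standardized over the fibres `{X = x}` of the index trial (law of total
expectation). On such a fibre, exchangeability and consistency identify `E[Y^a | X, S = 1]`
with `g_{1,a}` for `a ∈ {0, 1}`. Transportability moves `E[Y^2 - Y^0 | X, S = 1]` to the
external population, whose fibre is non-null by positivity of external selection, and there
exchangeability and consistency identify it with `g_{0,2} - g_{0,0}`. Linearity of the
conditional expectation then yields the difference in differences. -/

section FiniteExpectation

variable {Ω 𝒳 : Type*} [Fintype Ω] (p : Ω → ℝ)

lemma ind_nonneg (P : Prop) : 0 ≤ ind P := by
  unfold ind; split_ifs <;> norm_num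

lemma ind_and (P Q : Prop) : ind (P ∧ Q) = ind P * ind Q := by
  unfold ind; split_ifs <;> simp_all

lemma prob_nonneg (hp0 : ∀ ω, 0 ≤ p ω) (B : Ω → Prop) : 0 ≤ prob p B :=
  Finset.sum_nonneg fun ω _ => mul_nonneg (hp0 ω) (ind_nonneg _)

lemma prob_pos_of_mem (hp0 : ∀ ω, 0 ≤ p ω) {B : Ω → Prop} {ω : Ω} (hω : p ω ≠ 0)
    (hB : B ω) : 0 < prob p B := by
  have hle : p ω * ind (B ω) ≤ prob p B :=
    Finset.single_le_sum (f := fun ω' => p ω' * ind (B ω'))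
      (fun ω' _ => mul_nonneg (hp0 ω') (ind_nonneg _)) (Finset.mem_univ ω)
  rw [ind, if_pos hB, mul_one] at hle
  exact ((hp0 ω).lt_of_ne' hω).trans_le hle

lemma prob_and_pos_of_cprob_pos (hp0 : ∀ ω, 0 ≤ p ω) {B C : Ω → Prop}
    (h : 0 < cprob p B C) : 0 < prob p (fun ω => C ω ∧ B ω) := by
  have hBC : 0 < prob p (fun ω => B ω ∧ C ω) :=
    ((div_pos_iff.mp h).resolve_right fun h' => (prob_nonneg p hp0 _).not_gt h'.1).1
  simpa only [prob, pexp, and_comm] using hBC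

lemma cexp_sub (f g : Ω → ℝ) (B : Ω → Prop) :
    cexp p (fun ω => f ω - g ω) B = cexp p f B - cexp p g B := by
  simp only [cexp, pexp, ← sub_div, ← Finset.sum_sub_distrib, sub_mul, mul_sub]

lemma cexp_congr_of_ne_zero {f g : Ω → ℝ} (B : Ω → Prop)
    (h : ∀ ω, p ω ≠ 0 → B ω → f ω = g ω) : cexp p f B = cexp p g B := by
  unfold cexp pexp
  congr 1
  refine Finset.sum_congr rfl fun ω _ => ?_
  by_cases hp : p ω = 0
  · simp [hp]
  by_cases hB : B ω
  · simp only [h ω hp hB]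
  · simp [ind, hB]

lemma cexp_congr_on {f g : Ω → ℝ} (B : Ω → Prop) (h : ∀ ω, B ω → f ω = g ω) :
    cexp p f B = cexp p g B :=
  cexp_congr_of_ne_zero p B fun ω _ hB => h ω hB

/-- Undoing the division in `cexp` also holds on null events, where both sides vanish. -/
lemma cexp_mul_prob (hp0 : ∀ ω, 0 ≤ p ω) (f : Ω → ℝ) (B : Ω → Prop) :
    cexp p f B * prob p B = pexp p (fun ω => f ω * ind (B ω)) := by
  by_cases hB : prob p B = 0
  · have hnull : ∀ ω, p ω * ind (B ω) = 0 := fun ω =>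
      (Finset.sum_eq_zero_iff_of_nonneg fun ω _ => mul_nonneg (hp0 ω) (ind_nonneg _)).mp hB
        ω (Finset.mem_univ ω)
    rw [hB, mul_zero, pexp, Finset.sum_eq_zero fun ω _ => ?_]
    rw [mul_left_comm, hnull, mul_zero]
  · exact div_mul_cancel₀ _ hB

lemma pexp_const_mul (c : ℝ) (g : Ω → ℝ) : pexp p (fun ω => c * g ω) = c * pexp p g := by
  simp only [pexp, Finset.mul_sum]
  exact Finset.sum_congr rfl fun ω _ => by ring

lemma pexp_eq_sum_fibers (X : Ω → 𝒳) (g : Ω → ℝ) :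
    pexp p g = ∑ x ∈ Finset.univ.image X, pexp p (fun ω => g ω * ind (X ω = x)) := by
  simp only [pexp, ind, mul_ite, mul_one, mul_zero, ← Finset.sum_filter]
  exact (Finset.sum_fiberwise_of_maps_to
    (fun ω _ => Finset.mem_image_of_mem X (Finset.mem_univ ω)) _).symm

lemma cexp_tower (hp0 : ∀ ω, 0 ≤ p ω) (X : Ω → 𝒳) (B : Ω → Prop) (f : Ω → ℝ) :
    cexp p f B = cexp p (fun ω => cexp p f (fun ω' => X ω' = X ω ∧ B ω')) B := by
  rw [cexp, cexp]
  congr 1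
  rw [pexp_eq_sum_fibers p X, pexp_eq_sum_fibers p X]
  refine Finset.sum_congr rfl fun x _ => ?_
  have hfibre : ∀ ω, cexp p f (fun ω' => X ω' = X ω ∧ B ω') * ind (B ω) * ind (X ω = x) =
      cexp p f (fun ω' => X ω' = x ∧ B ω') * ind (X ω = x ∧ B ω) := fun ω => by
    by_cases hx : X ω = x
    · rw [hx, ind_and]; ring
    · simp [ind, hx]
  simp only [hfibre]
  rw [pexp_const_mul]
  refine Eq.trans ?_ (cexp_mul_prob p hp0 f _).symm
  simp only [pexp, ind_and]
  exact Finset.sum_congr rfl fun ω _ => by ring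

lemma cexp_eq_cexp_comp_of_fibres (hp0 : ∀ ω, 0 ≤ p ω) (X : Ω → 𝒳) (B : Ω → Prop)
    {f : Ω → ℝ} {h : 𝒳 → ℝ}
    (hfib : ∀ x, 0 < prob p (fun ω => X ω = x ∧ B ω) →
      cexp p f (fun ω => X ω = x ∧ B ω) = h x) :
    cexp p f B = cexp p (fun ω => h (X ω)) B := by
  rw [cexp_tower p hp0 X B f]
  exact cexp_congr_of_ne_zero p B fun ω hω hB =>
    hfib (X ω) (prob_pos_of_mem p hp0 (B := fun ω' => X ω' = X ω ∧ B ω') hω ⟨rfl, hB⟩)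

lemma cexp_eq_gfun_of_eqOn (X : Ω → 𝒳) (S A : Ω → ℕ) {Y Z : Ω → ℝ} {a : ℕ}
    (hZ : ∀ ω, A ω = a → Z ω = Y ω) (s : ℕ) (x : 𝒳) :
    cexp p Z (fun ω => X ω = x ∧ S ω = s ∧ A ω = a) = gfun p X S A Y s a x :=
  cexp_congr_on p _ fun ω hω => hZ ω hω.2.2

end FiniteExpectation

theorem statement3_general
    {Ω 𝒳 : Type*} [Fintype Ω] (p : Ω → ℝ)
    (hp0 : ∀ ω, 0 ≤ p ω)
    (X : Ω → 𝒳) (S A : Ω → ℕ) (Y : Ω → ℝ) (Ypo : ℕ → Ω → ℝ)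
    (hcons : ∀ ω a, A ω = a → Ypo a ω = Y ω)
    (hexch1 : ∀ x, ∀ a ∈ ({0, 1} : Set ℕ),
      0 < prob p (fun ω => X ω = x ∧ S ω = 1) →
      cexp p (Ypo a) (fun ω => X ω = x ∧ S ω = 1) =
        cexp p (Ypo a) (fun ω => X ω = x ∧ S ω = 1 ∧ A ω = a))
    (hexch0 : ∀ x, ∀ a ∈ ({0, 2} : Set ℕ),
      0 < prob p (fun ω => X ω = x ∧ S ω = 0) →
      cexp p (Ypo a) (fun ω => X ω = x ∧ S ω = 0) =
        cexp p (Ypo a) (fun ω => X ω = x ∧ S ω = 0 ∧ A ω = a))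
    (hA5 : ∀ x, 0 < prob p (fun ω => X ω = x ∧ S ω = 1) →
      0 < cprob p (fun ω => S ω = 0) (fun ω => X ω = x))
    (hA4' : ∀ x, 0 < prob p (fun ω => X ω = x ∧ S ω = 1) →
      cexp p (fun ω => Ypo 2 ω - Ypo 0 ω) (fun ω => X ω = x ∧ S ω = 1) =
        cexp p (fun ω => Ypo 2 ω - Ypo 0 ω) (fun ω => X ω = x ∧ S ω = 0)) :
    cexp p (fun ω => Ypo 1 ω - Ypo 2 ω) (fun ω => S ω = 1) =
      (gam p X S A Y 1 1 - gam p X S A Y 1 0) -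
        (gam p X S A Y 0 2 - gam p X S A Y 0 0) := by
  have htrial : ∀ a ∈ ({0, 1} : Set ℕ), cexp p (Ypo a) (fun ω => S ω = 1) = gam p X S A Y 1 a :=
    fun a ha => cexp_eq_cexp_comp_of_fibres p hp0 X _ fun x hx =>
      (hexch1 x a ha hx).trans (cexp_eq_gfun_of_eqOn p X S A (hcons · a) 1 x)
  have hexternal : cexp p (fun ω => Ypo 2 ω - Ypo 0 ω) (fun ω => S ω = 1) =
      gam p X S A Y 0 2 - gam p X S A Y 0 0 := by
    rw [gam, gam, ← cexp_sub]
    refine cexp_eq_cexp_comp_of_fibres p hp0 X _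
      (h := fun x => gfun p X S A Y 0 2 x - gfun p X S A Y 0 0 x) fun x hx => ?_
    have hx0 := prob_and_pos_of_cprob_pos p hp0 (hA5 x hx)
    rw [hA4' x hx, cexp_sub, hexch0 x 2 (by simp) hx0, hexch0 x 0 (by simp) hx0,
      cexp_eq_gfun_of_eqOn p X S A (hcons · 2), cexp_eq_gfun_of_eqOn p X S A (hcons · 0)]
  rw [cexp_sub] at hexternal ⊢
  linarith [htrial 1 (by simp), htrial 0 (by simp)]

theorem statement3
    {Ω 𝒳 : Type*} [Fintype Ω] (p : Ω → ℝ)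
    (hp0 : ∀ ω, 0 ≤ p ω) (hp1 : ∑ ω, p ω = 1)
    (X : Ω → 𝒳) (S A : Ω → ℕ) (Y : Ω → ℝ) (Ypo : ℕ → Ω → ℝ)
    (hS : 0 < prob p (fun ω => S ω = 1))
    (hcons : ∀ ω a, A ω = a → Ypo a ω = Y ω)
    (hexch1 : ∀ x, ∀ a ∈ ({0, 1} : Set ℕ),
      0 < prob p (fun ω => X ω = x ∧ S ω = 1) →
      cexp p (Ypo a) (fun ω => X ω = x ∧ S ω = 1) =
        cexp p (Ypo a) (fun ω => X ω = x ∧ S ω = 1 ∧ A ω = a))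
    (hpos1 : ∀ x, ∀ a ∈ ({0, 1} : Set ℕ),
      0 < prob p (fun ω => X ω = x ∧ S ω = 1) →
      0 < cprob p (fun ω => A ω = a) (fun ω => X ω = x ∧ S ω = 1))
    (hexch0 : ∀ x, ∀ a ∈ ({0, 2} : Set ℕ),
      0 < prob p (fun ω => X ω = x ∧ S ω = 0) →
      cexp p (Ypo a) (fun ω => X ω = x ∧ S ω = 0) =
        cexp p (Ypo a) (fun ω => X ω = x ∧ S ω = 0 ∧ A ω = a))
    (hpos0 : ∀ x, ∀ a ∈ ({0, 2} : Set ℕ),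
      0 < prob p (fun ω => X ω = x ∧ S ω = 0) →
      0 < cprob p (fun ω => A ω = a) (fun ω => X ω = x ∧ S ω = 0))
    (hA5 : ∀ x, 0 < prob p (fun ω => X ω = x ∧ S ω = 1) →
      0 < cprob p (fun ω => S ω = 0) (fun ω => X ω = x))
    (hA4' : ∀ x, 0 < prob p (fun ω => X ω = x ∧ S ω = 1) →
      cexp p (fun ω => Ypo 2 ω - Ypo 0 ω) (fun ω => X ω = x ∧ S ω = 1) =
        cexp p (fun ω => Ypo 2 ω - Ypo 0 ω) (fun ω => X ω = x ∧ S ω = 0)) :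
    cexp p (fun ω => Ypo 1 ω - Ypo 2 ω) (fun ω => S ω = 1) =
      (gam p X S A Y 1 1 - gam p X S A Y 1 0) -
        (gam p X S A Y 0 2 - gam p X S A Y 0 0) :=
  statement3_general p hp0 X S A Y Ypo hcons hexch1 hexch0 hA5 hA4'
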